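/- arXiv:2511.04822 — 5 statements merged into one kernel-verified Lean document; each statement's English description precedes it below -/
import Mathlib

section
/- Let H be an ICC group, K a group, and γ, γ' : K → H group homomorphisms such that the image γ(K) is a subgroup of finite index in H. Let F ⊆ H be a finite nonempty subset such that γ(g) F γ'(g)⁻¹ = F for every g ∈ K. Then F consists of exactly one element. -/
/-- Let `H` be an ICC group, `K` a group, `γ, γ' : K → H` homomorphisms
with `γ(K)` of finite index in `H`, and `F ⊆ H` a finite nonempty subset with
`γ(g) F γ'(g)⁻¹ = F` for all `g ∈ K`. Then `F` is a singleton. -/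
theorem icc_twisted_conjInvariant_finite_set_singleton
    {H K : Type*} [Group H] [Group K]
    (hicc : ∀ h : H, h ≠ 1 → {x : H | ∃ y : H, x = y * h * y⁻¹}.Infinite)
    (γ γ' : K →* H) (hγ : γ.range.FiniteIndex)
    (F : Set H) (hFfin : F.Finite) (hFne : F.Nonempty)
    (hFinv : ∀ g : K, (fun f => γ g * f * (γ' g)⁻¹) '' F = F) :
    ∃ h : H, F = {h} := by
  haveI := hγ
  set D : Set H := (fun p : H × H => p.1 * p.2⁻¹) '' (F ×ˢ F) with hD
  have hDfin : D.Finite := (hFfin.prod hFfin).image _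
  have hDconj : ∀ s ∈ γ.range, ∀ d ∈ D, s * d * s⁻¹ ∈ D := by
    rintro s ⟨g, rfl⟩ d ⟨⟨x, y⟩, ⟨hx, hy⟩, rfl⟩
    refine ⟨(γ g * x * (γ' g)⁻¹, γ g * y * (γ' g)⁻¹), ⟨?_, ?_⟩, ?_⟩
    · rw [← hFinv g]; exact ⟨x, hx, rfl⟩
    · rw [← hFinv g]; exact ⟨y, hy, rfl⟩
    · simp only
      group
  have key : ∀ d ∈ D, d = 1 := by
    intro d hd
    by_contra hne
    apply hicc d hne
    have hsub : {x : H | ∃ y : H, x = y * d * y⁻¹} ⊆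
        ⋃ q : H ⧸ γ.range, (fun e => q.out * e * q.out⁻¹) '' D := by
      rintro x ⟨y, rfl⟩
      obtain ⟨h, hh⟩ := QuotientGroup.mk_out_eq_mul γ.range y
      refine Set.mem_iUnion.2 ⟨QuotientGroup.mk y, ⟨(h : H)⁻¹ * d * ((h : H)⁻¹)⁻¹,
        hDconj _ (inv_mem h.2) d hd, ?_⟩⟩
      simp only [hh]
      group
    exact Set.Finite.subset (Set.finite_iUnion fun q => hDfin.image _) hsub
  obtain ⟨a, ha⟩ := hFne
  refine ⟨a, Set.eq_singleton_iff_unique_mem.2 ⟨ha, fun x hx => ?_⟩⟩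
  have : x * a⁻¹ = 1 := key _ ⟨(x, a), ⟨hx, ha⟩, rfl⟩
  exact mul_inv_eq_one.mp this
end

section
/- Let H be an ICC group, K a group, and γ, γ' : K → H group homomorphisms such that the image γ(K) is a subgroup of finite index in H. Let f : H → ℝ be a function with f(h) ≥ 0 for all h ∈ H, with ∑_{h ∈ H} f(h)² < ∞, with f not identically zero, and satisfying f(γ(g) h γ'(g)⁻¹) = f(h) for every g ∈ K and h ∈ H. Then the support {h ∈ H : f(h) ≠ 0} consists of exactly one element. -/
/-!
Let `K` act on `H` by `g • h = γ g * h * (γ' g)⁻¹`, so that `f` is invariant. A summable function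
takes each nonzero value only finitely often, so every point of the support of `f` has a finite
orbit, i.e. a stabilizer of finite index. If `h₀` and `h₁` both lie in the support, then `γ g`
commutes with `h₁ * h₀⁻¹` for every `g` fixing both; the image under `γ` of the intersection of the
two stabilizers has finite index in `H`, hence so does the centralizer of `h₁ * h₀⁻¹`, whose
conjugacy class is therefore finite. The ICC property forces `h₁ = h₀`.
-/

open Subgroup MulAction

theorem Summable.finite_setOf_eq {α E : Type*} [AddCommGroup E] [TopologicalSpace E]
    [IsTopologicalAddGroup E] [T1Space E] {f : α → E} (hf : Summable f) {a : E} (ha : a ≠ 0) :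
    {x | f x = a}.Finite := by
  simpa using Filter.eventually_cofinite.mp (hf.tendsto_cofinite_zero.eventually_ne ha.symm)

theorem MulAction.finiteIndex_stabilizer_iff_finite_orbit {G X : Type*} [Group G]
    [MulAction G X] (x : X) : (stabilizer G x).FiniteIndex ↔ (orbit G x).Finite := by
  rw [finiteIndex_iff, index_stabilizer]
  exact ⟨Set.finite_of_ncard_ne_zero, fun h => ((Set.ncard_pos h).2 ⟨x, mem_orbit_self x⟩).ne'⟩

theorem MulAction.finiteIndex_stabilizer_of_summable {G X E : Type*} [Group G] [MulAction G X]
    [AddCommGroup E] [TopologicalSpace E] [IsTopologicalAddGroup E] [T1Space E]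
    {f : X → E} (hinv : ∀ (g : G) (x : X), f (g • x) = f x) (hf : Summable f) {x : X}
    (hx : f x ≠ 0) : (stabilizer G x).FiniteIndex := by
  refine (finiteIndex_stabilizer_iff_finite_orbit x).2 <| (hf.finite_setOf_eq hx).subset ?_
  rintro _ ⟨g, rfl⟩
  exact hinv g x

instance Subgroup.finiteIndex_map {G G' : Type*} [Group G] [Group G'] (L : Subgroup G)
    [L.FiniteIndex] (φ : G →* G') [φ.range.FiniteIndex] : (L.map φ).FiniteIndex := by
  rw [finiteIndex_iff, index_map]
  exact mul_ne_zero (finiteIndex_of_le le_sup_left).index_ne_zero FiniteIndex.index_ne_zero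

theorem Subgroup.finite_conjugates_of_finiteIndex_centralizer {G : Type*} [Group G] (c : G)
    [(centralizer {c}).FiniteIndex] : {x : G | ∃ y : G, x = y * c * y⁻¹}.Finite := by
  refine (Set.finite_range fun q : G ⧸ centralizer {c} => q.out * c * q.out⁻¹).subset ?_
  rintro _ ⟨y, rfl⟩
  obtain ⟨⟨z, hz⟩, hyz⟩ := QuotientGroup.mk_out_eq_mul (centralizer {c}) y
  refine ⟨y, ?_⟩
  calc (y : G ⧸ centralizer {c}).out * c * (y : G ⧸ centralizer {c}).out⁻¹
      = y * (z * c) * z⁻¹ * y⁻¹ := by rw [hyz]; group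
    _ = y * c * y⁻¹ := by rw [mem_centralizer_singleton_iff.1 hz]; group

theorem commute_mul_inv_of_mul_mul_inv_eq {G : Type*} [Group G] {a b x y : G}
    (hx : a * x * b⁻¹ = x) (hy : a * y * b⁻¹ = y) : Commute a (y * x⁻¹) := by
  calc a * (y * x⁻¹) = a * y * b⁻¹ * (a * x * b⁻¹)⁻¹ * a := by group
    _ = y * x⁻¹ * a := by rw [hx, hy]

abbrev MonoidHom.twistedConjAction {K H : Type*} [Group K] [Group H] (γ γ' : K →* H) :
    MulAction K H where
  smul g h := γ g * h * (γ' g)⁻¹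
  one_smul h := show γ 1 * h * (γ' 1)⁻¹ = h by simp
  mul_smul g₁ g₂ h := show γ (g₁ * g₂) * h * (γ' (g₁ * g₂))⁻¹
    = γ g₁ * (γ g₂ * h * (γ' g₂)⁻¹) * (γ' g₁)⁻¹ by simp [mul_assoc]

theorem icc_twisted_invariant_l2_function_support_singleton_general
    {H K : Type*} [Group H] [Group K]
    (hicc : ∀ h : H, h ≠ 1 → {x : H | ∃ y : H, x = y * h * y⁻¹}.Infinite)
    (γ γ' : K →* H) (hγ : γ.range.FiniteIndex)
    (f : H → ℝ)
    (hfsum : Summable fun h : H => (f h) ^ 2)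
    (hfne : f ≠ 0)
    (hfinv : ∀ (g : K) (h : H), f (γ g * h * (γ' g)⁻¹) = f h) :
    ∃ h₀ : H, {h : H | f h ≠ 0} = {h₀} := by
  let _ := γ.twistedConjAction γ'
  have hstab (h : H) (hh : f h ≠ 0) : (stabilizer K h).FiniteIndex :=
    finiteIndex_stabilizer_of_summable (fun g h => congrArg (· ^ 2) (hfinv g h)) hfsum
      (pow_ne_zero 2 hh)
  obtain ⟨h₀, hh₀⟩ : ∃ h, f h ≠ 0 := Function.ne_iff.mp hfne
  refine ⟨h₀, Set.eq_singleton_iff_unique_mem.2 ⟨hh₀, fun h₁ hh₁ => ?_⟩⟩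
  have := hstab h₀ hh₀
  have := hstab h₁ hh₁
  have hcent : (stabilizer K h₀ ⊓ stabilizer K h₁).map γ ≤ centralizer {h₁ * h₀⁻¹} := by
    rintro _ ⟨g, ⟨hg₀, hg₁⟩, rfl⟩
    exact mem_centralizer_singleton_iff.2 (commute_mul_inv_of_mul_mul_inv_eq hg₀ hg₁).eq
  have := finiteIndex_of_le hcent
  by_contra hne
  exact hicc _ (mt mul_inv_eq_one.1 hne) (finite_conjugates_of_finiteIndex_centralizer _)

/-- Let `H` be an ICC group, `K` a group, `γ, γ' : K → H` homomorphisms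
with `γ(K)` of finite index in `H`. Let `f : H → ℝ` be nonnegative, square-summable,
not identically zero, and satisfy `f (γ g * h * (γ' g)⁻¹) = f h` for all `g ∈ K`, `h ∈ H`.
Then the support of `f` consists of exactly one element. -/
theorem icc_twisted_invariant_l2_function_support_singleton
    {H K : Type*} [Group H] [Group K]
    (hicc : ∀ h : H, h ≠ 1 → {x : H | ∃ y : H, x = y * h * y⁻¹}.Infinite)
    (γ γ' : K →* H) (hγ : γ.range.FiniteIndex)
    (f : H → ℝ) (hf0 : ∀ h : H, 0 ≤ f h)
    (hfsum : Summable fun h : H => (f h) ^ 2)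
    (hfne : f ≠ 0)
    (hfinv : ∀ (g : K) (h : H), f (γ g * h * (γ' g)⁻¹) = f h) :
    ∃ h₀ : H, {h : H | f h ≠ 0} = {h₀} :=
  icc_twisted_invariant_l2_function_support_singleton_general hicc γ γ' hγ f hfsum hfne hfinv
end

section
/- Let D be an ICC group, E ≤ D a subgroup of finite index, and d ∈ D with d ≠ 1. Then the set {e d e⁻¹ : e ∈ E} is infinite. -/
/-! If the `E`-conjugacy class of `d` were finite, the centralizer of `d` in `E` would have
finite index in `E`, hence in `D`, so the full conjugacy class of `d` would be finite. -/

namespace MulAction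

variable {G X : Type*} [Group G] [MulAction G X]

theorem finite_orbit_of_finite_orbit_subgroup (H : Subgroup G) [H.FiniteIndex] {x : X}
    (hx : (orbit H x).Finite) : (orbit G x).Finite := by
  have hrel : (stabilizer G x).relIndex H ≠ 0 := by
    have : stabilizer H x = (stabilizer G x).subgroupOf H := rfl
    rw [Subgroup.relIndex, ← this, index_stabilizer]
    exact Set.ncard_ne_zero_of_mem (mem_orbit_self x) hx
  have hindex : (stabilizer G x).index ≠ 0 :=
    Subgroup.relIndex_top_right (stabilizer G x) ▸ Subgroup.relIndex_ne_zero_trans hrel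
      (H.relIndex_top_right ▸ Subgroup.FiniteIndex.index_ne_zero)
  exact Set.finite_of_ncard_ne_zero (index_stabilizer G x ▸ hindex)

end MulAction

namespace ConjAct

variable {G : Type*} [Group G]

theorem orbit_eq_setOf_conj (g : G) :
    MulAction.orbit (ConjAct G) g = {x : G | ∃ y : G, x = y * g * y⁻¹} := by
  ext x
  simp only [MulAction.mem_orbit_iff, smul_def, eq_comm, Set.mem_ofPred_eq]
  exact toConjAct.surjective.exists

theorem orbit_map_toConjAct (H : Subgroup G) (g : G) :
    MulAction.orbit ↥(H.map (toConjAct : G ≃* ConjAct G).toMonoidHom) g =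
      {x : G | ∃ h ∈ H, x = h * g * h⁻¹} := by
  ext x
  constructor
  · rintro ⟨⟨_, h, hh, rfl⟩, rfl⟩
    exact ⟨h, hh, toConjAct_smul h g⟩
  · rintro ⟨h, hh, rfl⟩
    exact ⟨⟨toConjAct h, h, hh, rfl⟩, toConjAct_smul h g⟩

instance finiteIndex_map_toConjAct (H : Subgroup G) [H.FiniteIndex] :
    (H.map (toConjAct : G ≃* ConjAct G).toMonoidHom).FiniteIndex :=
  ⟨by
    rw [Subgroup.index_map_of_bijective (toConjAct : G ≃* ConjAct G).bijective]
    exact Subgroup.FiniteIndex.index_ne_zero⟩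

end ConjAct

/-- Let `D` be an ICC group, `E ≤ D` a finite index subgroup, and
`d ∈ D` with `d ≠ 1`. Then `{e d e⁻¹ : e ∈ E}` is infinite. -/
theorem icc_conjClass_under_finiteIndex_infinite
    {D : Type*} [Group D]
    (hicc : ∀ d : D, d ≠ 1 → {x : D | ∃ y : D, x = y * d * y⁻¹}.Infinite)
    (E : Subgroup D) (hE : E.FiniteIndex)
    (d : D) (hd : d ≠ 1) :
    {x : D | ∃ e ∈ E, x = e * d * e⁻¹}.Infinite := by
  intro hfinite
  rw [← ConjAct.orbit_map_toConjAct] at hfinite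
  apply hicc d hd
  rw [← ConjAct.orbit_eq_setOf_conj]
  exact MulAction.finite_orbit_of_finite_orbit_subgroup _ hfinite
end

section
/- Let D be an ICC group, B a group, and γ, γ' : B → D group homomorphisms whose images γ(B) and γ'(B) are subgroups of finite index in D. Suppose there is a finite subset F ⊆ D such that F γ(b) F ∩ F γ'(b) F ≠ ∅ for every b ∈ B. Then there exists d ∈ D such that γ(b) = d γ'(b) d⁻¹ for every b ∈ B. -/
open scoped Pointwise

/-- The subgroup of elements where `γ` equals the conjugate of `γ'` by `c⁻¹`. -/
def twistEqSubgroup {D B : Type*} [Group D] [Group B] (γ γ' : B →* D) (c : D) :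
    Subgroup B where
  carrier := {x | γ x = c⁻¹ * γ' x * c}
  one_mem' := by simp
  mul_mem' := by
    intro x y hx hy
    simp only [Set.mem_setOf_eq, map_mul] at *
    rw [hx, hy]; group
  inv_mem' := by
    intro x hx
    simp only [Set.mem_setOf_eq, map_inv] at *
    rw [hx]; group

/-- Let `D` be an ICC group, `B` a group, `γ, γ' : B → D` homomorphisms
with finite index images, and `F ⊆ D` a finite subset with
`F γ(b) F ∩ F γ'(b) F ≠ ∅` for all `b ∈ B`. Then `γ` and `γ'` are conjugate by some
`d ∈ D`. -/
theorem icc_homs_meeting_double_translates_are_conjugate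
    {D B : Type*} [Group D] [Group B]
    (hicc : ∀ d : D, d ≠ 1 → {x : D | ∃ y : D, x = y * d * y⁻¹}.Infinite)
    (γ γ' : B →* D) (hγ : γ.range.FiniteIndex) (hγ' : γ'.range.FiniteIndex)
    (F : Set D) (hFfin : F.Finite)
    (hmeet : ∀ b : B, ({x : D | ∃ f₁ ∈ F, ∃ f₂ ∈ F, x = f₁ * γ b * f₂} ∩
        {x : D | ∃ f₁ ∈ F, ∃ f₂ ∈ F, x = f₁ * γ' b * f₂}).Nonempty) :
    ∃ d : D, ∀ b : B, γ b = d * γ' b * d⁻¹ := by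
  classical
  set Fs : Finset D := hFfin.toFinset with hFs
  -- the finite set of twisting pairs
  set s : Finset (D × D) :=
    (Fs ×ˢ Fs ×ˢ Fs ×ˢ Fs).image
      (fun q => (q.1⁻¹ * q.2.2.1, q.2.2.2 * q.2.1⁻¹)) with hs
  have hsmem : ∀ b : B, ∃ p ∈ s, γ b = p.1 * γ' b * p.2 := by
    intro b
    obtain ⟨x, ⟨f₁, hf₁, f₂, hf₂, hx1⟩, ⟨g₁, hg₁, g₂, hg₂, hx2⟩⟩ := hmeet b
    refine ⟨(f₁⁻¹ * g₁, g₂ * f₂⁻¹), ?_, ?_⟩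
    · refine Finset.mem_image.mpr ⟨(f₁, f₂, g₁, g₂), ?_, rfl⟩
      simp [hFs, hFfin.mem_toFinset, hf₁, hf₂, hg₁, hg₂]
    · have : f₁ * γ b * f₂ = g₁ * γ' b * g₂ := by rw [← hx1, ← hx2]
      have := congrArg (fun t => f₁⁻¹ * t * f₂⁻¹) this
      calc γ b = f₁⁻¹ * (f₁ * γ b * f₂) * f₂⁻¹ := by group
        _ = f₁⁻¹ * (g₁ * γ' b * g₂) * f₂⁻¹ := by rw [‹f₁ * γ b * f₂ = g₁ * γ' b * g₂›]
        _ = (f₁⁻¹ * g₁) * γ' b * (g₂ * f₂⁻¹) := by group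
  -- cover B by left cosets of the subgroups K p.2
  set Hs : D × D → Subgroup B := fun p => twistEqSubgroup γ γ' p.2 with hHs
  set g : D × D → B := fun p =>
    if h : ∃ b, γ b = p.1 * γ' b * p.2 then h.choose else 1 with hg
  have hcovers : ⋃ p ∈ s, (g p) • (Hs p : Set B) = Set.univ := by
    rw [Set.eq_univ_iff_forall]
    intro b
    obtain ⟨p, hp, hpb⟩ := hsmem b
    have hex : ∃ b', γ b' = p.1 * γ' b' * p.2 := ⟨b, hpb⟩
    refine Set.mem_biUnion hp ?_
    rw [mem_leftCoset_iff]
    have hb₀ : γ (g p) = p.1 * γ' (g p) * p.2 := by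
      rw [hg]; simp only [dif_pos hex]; exact hex.choose_spec
    show γ ((g p)⁻¹ * b) = p.2⁻¹ * γ' ((g p)⁻¹ * b) * p.2
    rw [map_mul, map_mul, map_inv, map_inv, hb₀, hpb]
    group
  obtain ⟨p, _, hfi⟩ := Subgroup.exists_finiteIndex_of_leftCoset_cover hcovers
  set c : D := p.2 with hc
  set K : Subgroup B := twistEqSubgroup γ γ' c with hK
  haveI : K.FiniteIndex := hfi
  refine ⟨c⁻¹, fun b => ?_⟩
  -- the finite-index subgroup L on which the conjugation relation is stable
  set e : B →* B := (MulAut.conj b).toMonoidHom with he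
  set L : Subgroup B := K ⊓ K.comap e with hL
  haveI : (K.comap e).FiniteIndex := by
    constructor
    rw [Subgroup.index_comap_of_surjective _ (MulAut.conj b).surjective]
    exact hfi.index_ne_zero
  haveI : L.FiniteIndex := inferInstance
  set M : Subgroup D := L.map γ with hM
  haveI hMfi : M.FiniteIndex := by
    constructor
    rw [hM, Subgroup.index_map]
    exact mul_ne_zero (Subgroup.finiteIndex_of_le (le_sup_left : L ≤ L ⊔ γ.ker)).index_ne_zero
      hγ.index_ne_zero
  set w : D := c⁻¹ * γ' b * c with hw
  set z : D := w⁻¹ * γ b with hz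
  -- z commutes with M
  have hcomm : ∀ m ∈ M, z * m = m * z := by
    rintro m ⟨x, hxL, rfl⟩
    have hxK : γ x = c⁻¹ * γ' x * c := hxL.1
    have hbxK : γ (b * x * b⁻¹) = c⁻¹ * γ' (b * x * b⁻¹) * c := hxL.2
    have key : γ b * γ x * (γ b)⁻¹ = w * γ x * w⁻¹ := by
      have h1 : γ b * γ x * (γ b)⁻¹ = γ (b * x * b⁻¹) := by
        simp [map_mul, map_inv]
      rw [h1, hbxK, hw, hxK]
      simp only [map_mul, map_inv]
      group
    rw [hz]
    have := congrArg (fun t => w⁻¹ * t * γ b) key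
    calc w⁻¹ * γ b * γ x = w⁻¹ * (γ b * γ x * (γ b)⁻¹) * γ b := by group
      _ = w⁻¹ * (w * γ x * w⁻¹) * γ b := by rw [key]
      _ = γ x * (w⁻¹ * γ b) := by group
  -- the conjugacy class of z is finite
  have hfin : {x : D | ∃ y : D, x = y * z * y⁻¹}.Finite := by
    have hwd : ∀ a b' : D, (a : D ⧸ M) = (b' : D ⧸ M) → a * z * a⁻¹ = b' * z * b'⁻¹ := by
      intro a b' hab
      rw [QuotientGroup.eq] at hab
      have hcz : z * (a⁻¹ * b') = (a⁻¹ * b') * z := hcomm _ hab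
      have : b' = a * (a⁻¹ * b') := by group
      rw [this]
      set m := a⁻¹ * b'
      have hm : m * z * m⁻¹ = z := by rw [← hcz]; group
      calc a * z * a⁻¹ = a * (m * z * m⁻¹) * (a * m)⁻¹ * (a * m) * a⁻¹ * a * a⁻¹ := by
            rw [hm]; group
        _ = (a * m) * z * (a * m)⁻¹ := by group
    set φ : D ⧸ M → D := Quotient.lift (fun y : D => y * z * y⁻¹)
      (fun a b' h => hwd a b' (Quotient.sound h)) with hφ
    have : {x : D | ∃ y : D, x = y * z * y⁻¹} ⊆ Set.range φ := by
      rintro x ⟨y, rfl⟩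
      exact ⟨(y : D ⧸ M), rfl⟩
    exact (Set.finite_range φ).subset this
  have hz1 : z = 1 := by
    by_contra h
    exact (hicc z h) hfin
  have : γ b = w := by
    have := congrArg (fun t => w * t) hz1
    simpa [hz, mul_assoc] using this
  rw [this, hw]
  group
end

section
/- Let G be a group, H ≤ G a subgroup of finite index t, and g₁, …, g_t ∈ G a complete set of representatives of the right cosets of H, i.e. G is the disjoint union of the sets H g_i for 1 ≤ i ≤ t. Fix a positive integer k and let I = {1, …, t}. Then: (a) for every g ∈ G and every j = (j₁, …, j_k) ∈ I^k there is a unique i = (i₁, …, i_k) ∈ I^k such that g_{j_l} g_{j_{l+1}} ⋯ g_{j_k} · g⁻¹ ∈ H · g_{i_l} g_{i_{l+1}} ⋯ g_{i_k} for every 1 ≤ l ≤ k; and (b) defining g · j to be this unique i gives a left action of the group G on the set I^k. -/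
/-!
Read from the right, the conditions determine `i` one entry at a time: once the tail
`i_{l+1}, …, i_k` is known, the condition at `l` asks that `g_{i_l}` represent the right coset
of `g_{j_l} ⋯ g_{j_k} x⁻¹ (g_{i_{l+1}} ⋯ g_{i_k})⁻¹`, which pins `i_l` down uniquely. The action
axioms then follow from uniqueness, because the defining conditions for `y` and for `x`
multiply to the defining condition for `x * y`.
-/

section SuffixProd

variable {G : Type*} [Group G] {t : ℕ}

def suffixProd (g : Fin t → G) {k : ℕ} (i : Fin k → Fin t) (l : ℕ) : G :=
  ((List.ofFn fun m => g (i m)).drop l).prod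

variable {H : Subgroup G} {g : Fin t → G}

@[simp]
lemma suffixProd_cons_zero {k : ℕ} (b : Fin t) (i : Fin k → Fin t) :
    suffixProd g (Fin.cons b i : Fin (k + 1) → Fin t) 0 = g b * suffixProd g i 0 := by
  simp [suffixProd, List.ofFn_succ]

@[simp]
lemma suffixProd_cons_succ {k : ℕ} (b : Fin t) (i : Fin k → Fin t) (l : ℕ) :
    suffixProd g (Fin.cons b i : Fin (k + 1) → Fin t) (l + 1) = suffixProd g i l := by
  simp [suffixProd, List.ofFn_succ]

lemma existsUnique_forall_mul_inv_suffixProd_mem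
    (hrep : ∀ x : G, ∃! i : Fin t, x * (g i)⁻¹ ∈ H) :
    ∀ {k : ℕ} (a : Fin k → G), ∃! i : Fin k → Fin t, ∀ l : Fin k, a l * (suffixProd g i l)⁻¹ ∈ H
  | 0, _ => ⟨finZeroElim, finZeroElim, fun _ _ => funext finZeroElim⟩
  | k + 1, a => by
    obtain ⟨tail, htail, htail_unique⟩ :=
      existsUnique_forall_mul_inv_suffixProd_mem hrep (Fin.tail a)
    obtain ⟨head, hhead, hhead_unique⟩ := hrep (a 0 * (suffixProd g tail 0)⁻¹)
    have cons_iff : ∀ (b : Fin t) (i : Fin k → Fin t),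
        (∀ l : Fin (k + 1), a l * (suffixProd g (Fin.cons b i : Fin (k + 1) → Fin t) l)⁻¹ ∈ H) ↔
          a 0 * (suffixProd g i 0)⁻¹ * (g b)⁻¹ ∈ H ∧
            ∀ l : Fin k, Fin.tail a l * (suffixProd g i l)⁻¹ ∈ H := by
      intro b i
      simp [Fin.forall_fin_succ, Fin.tail, mul_assoc]
    refine ⟨Fin.cons head tail, (cons_iff head tail).2 ⟨hhead, htail⟩, fun i hi => ?_⟩
    rw [← Fin.cons_self_tail i, cons_iff] at hi
    obtain rfl := htail_unique _ hi.2
    rw [← hhead_unique _ hi.1, Fin.cons_self_tail]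

lemma suffixProd_mul_mul_inv_mul_inv_mem {k : ℕ} {x y : G} {i j m : Fin k → Fin t} {l : ℕ}
    (hy : suffixProd g j l * y⁻¹ * (suffixProd g i l)⁻¹ ∈ H)
    (hx : suffixProd g i l * x⁻¹ * (suffixProd g m l)⁻¹ ∈ H) :
    suffixProd g j l * (x * y)⁻¹ * (suffixProd g m l)⁻¹ ∈ H := by
  convert H.mul_mem hy hx using 1
  group

end SuffixProd

theorem coset_representative_action_on_tuples_general
    {G : Type*} [Group G] (H : Subgroup G) (t : ℕ)
    (g : Fin t → G)
    (hrep : ∀ x : G, ∃! i : Fin t, x * (g i)⁻¹ ∈ H)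
    (k : ℕ) :
    (∀ (x : G) (j : Fin k → Fin t), ∃! i : Fin k → Fin t,
      ∀ l : Fin k,
        ((List.ofFn fun m => g (j m)).drop l).prod * x⁻¹ *
          (((List.ofFn fun m => g (i m)).drop l).prod)⁻¹ ∈ H) ∧
    (∃ act : G → (Fin k → Fin t) → (Fin k → Fin t),
      (∀ (x : G) (j : Fin k → Fin t) (l : Fin k),
        ((List.ofFn fun m => g (j m)).drop l).prod * x⁻¹ *
          (((List.ofFn fun m => g (act x j m)).drop l).prod)⁻¹ ∈ H) ∧
      (∀ j : Fin k → Fin t, act 1 j = j) ∧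
      (∀ (x y : G) (j : Fin k → Fin t), act (x * y) j = act x (act y j))) := by
  have hunique : ∀ (x : G) (j : Fin k → Fin t), ∃! i : Fin k → Fin t,
      ∀ l : Fin k, suffixProd g j l * x⁻¹ * (suffixProd g i l)⁻¹ ∈ H :=
    fun x j => existsUnique_forall_mul_inv_suffixProd_mem hrep _
  choose act hact using fun x j => (hunique x j).exists
  refine ⟨hunique, act, hact, fun j => ?_, fun x y j => ?_⟩
  · exact (hunique 1 j).unique (hact 1 j) fun l => by simp
  · exact (hunique (x * y) j).unique (hact (x * y) j) fun l =>
      suffixProd_mul_mul_inv_mul_inv_mem (hact y j l) (hact x (act y j) l)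

/-- Let `H ≤ G` have finite index `t` with right coset representatives
`g 0, …, g (t-1)` (so `G = ⨆ᵢ H * gᵢ`, a disjoint union, encoded by the unique existence
hypothesis `hrep`). Fix `k > 0`. For a tuple `j : Fin k → Fin t` and `l : Fin k`, the
suffix product `g_{j_l} g_{j_{l+1}} ⋯ g_{j_{k-1}}` is
`((List.ofFn fun m => g (j m)).drop l).prod`.
(a) For every `x ∈ G` and `j ∈ I^k` there is a unique `i ∈ I^k` with
`g_{j_l} ⋯ g_{j_{k-1}} x⁻¹ ∈ H g_{i_l} ⋯ g_{i_{k-1}}` for all `l`; and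
(b) defining `x · j` to be this unique `i` yields a left action of `G` on `I^k`. -/
theorem coset_representative_action_on_tuples
    {G : Type*} [Group G] (H : Subgroup G) (t : ℕ) (ht : 0 < t)
    (g : Fin t → G)
    (hrep : ∀ x : G, ∃! i : Fin t, x * (g i)⁻¹ ∈ H)
    (k : ℕ) (hk : 0 < k) :
    (∀ (x : G) (j : Fin k → Fin t), ∃! i : Fin k → Fin t,
      ∀ l : Fin k,
        ((List.ofFn fun m => g (j m)).drop l).prod * x⁻¹ *
          (((List.ofFn fun m => g (i m)).drop l).prod)⁻¹ ∈ H) ∧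
    (∃ act : G → (Fin k → Fin t) → (Fin k → Fin t),
      (∀ (x : G) (j : Fin k → Fin t) (l : Fin k),
        ((List.ofFn fun m => g (j m)).drop l).prod * x⁻¹ *
          (((List.ofFn fun m => g (act x j m)).drop l).prod)⁻¹ ∈ H) ∧
      (∀ j : Fin k → Fin t, act 1 j = j) ∧
      (∀ (x y : G) (j : Fin k → Fin t), act (x * y) j = act x (act y j))) :=
  coset_representative_action_on_tuples_general H t g hrep k
end
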